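/- arXiv:1008.1029 — 3 statements merged into one kernel-verified Lean document; each statement's English description precedes it below -/
import Mathlib

section
/- Let r be a positive integer and let G ≤ V(Q), with qubit set Q = Fin L × Fin L (one qubit per lattice site), be spanned by generators each of whose supports is contained in some square box of size r×r. Assume G has at least one logical qubit (dim C(G) > dim(G ∩ C(G))) and distance d. Let A, B ⊆ Q be disjoint subsets such that l(A) = 0 and |B| + |∂(Q∖A)| < d, where ∂M denotes the set of qubits outside M lying within Chebyshev distance r of some qubit of M. Then l(A ∪ B) = 0. -/
set_option linter.unusedSectionVars false

open Finset Matrix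

abbrev F2 : Type := ZMod 2

abbrev PauliSpace (Q : Type) := Q → F2 × F2

section Pauli

variable {Q : Type} [Fintype Q] [DecidableEq Q]

/-- Support of a Pauli vector. -/
def psupp (v : PauliSpace Q) : Finset Q := Finset.univ.filter (fun q => v q ≠ (0, 0))

/-- Weight of a Pauli vector. -/
def pwt (v : PauliSpace Q) : ℕ := (psupp v).card

/-- The symplectic form. -/
def omegaF (u v : PauliSpace Q) : F2 :=
  ∑ q, ((u q).1 * (v q).2 + (u q).2 * (v q).1)

lemma omegaF_add_left (u v w : PauliSpace Q) :
    omegaF (u + v) w = omegaF u w + omegaF v w := by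
  simp only [omegaF, Pi.add_apply, Prod.fst_add, Prod.snd_add, ← Finset.sum_add_distrib]
  exact Finset.sum_congr rfl (fun q _ => by ring)

lemma omegaF_smul_left (c : F2) (u w : PauliSpace Q) :
    omegaF (c • u) w = c * omegaF u w := by
  simp only [omegaF, Pi.smul_apply, Prod.smul_fst, Prod.smul_snd, smul_eq_mul,
    Finset.mul_sum]
  exact Finset.sum_congr rfl (fun q _ => by ring)

/-- Centralizer of a subspace w.r.t. the symplectic form. -/
def pcent (G : Submodule F2 (PauliSpace Q)) : Submodule F2 (PauliSpace Q) where
  carrier := {v | ∀ g ∈ G, omegaF v g = 0}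
  zero_mem' := by
    intro g _
    simp [omegaF]
  add_mem' := by
    intro a b ha hb g hg
    rw [omegaF_add_left, ha g hg, hb g hg, add_zero]
  smul_mem' := by
    intro c a ha g hg
    rw [omegaF_smul_left, ha g hg, mul_zero]

/-- Stabilizer group of a gauge group. -/
def pstab (G : Submodule F2 (PauliSpace Q)) : Submodule F2 (PauliSpace Q) := G ⊓ pcent G

/-- Single-qubit Pauli X vector. -/
def Xop (c : Q) : PauliSpace Q := fun q => if q = c then (1, 0) else (0, 0)

/-- Single-qubit Pauli Z vector. -/
def Zop (c : Q) : PauliSpace Q := fun q => if q = c then (0, 1) else (0, 0)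

/-- The set of weights of dressed logical operators; its infimum is the distance. -/
def distSet (G : Submodule F2 (PauliSpace Q)) : Set ℕ :=
  {w | ∃ v, v ∈ pcent (pstab G) ∧ v ∉ G ∧ pwt v = w}

/-- Pauli vectors supported in `M`. -/
def PMod (M : Finset Q) : Submodule F2 (PauliSpace Q) where
  carrier := {v | ∀ q, q ∉ M → v q = 0}
  zero_mem' := by intro q _; rfl
  add_mem' := by
    intro a b ha hb q hq
    simp [Pi.add_apply, ha q hq, hb q hq]
  smul_mem' := by
    intro c a ha q hq
    simp [Pi.smul_apply, ha q hq]

/-- Projection onto the qubits in `M`. -/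
def projL (M : Finset Q) : PauliSpace Q →ₗ[F2] PauliSpace Q where
  toFun v := fun q => if q ∈ M then v q else 0
  map_add' a b := by funext q; by_cases h : q ∈ M <;> simp [h]
  map_smul' c a := by funext q; by_cases h : q ∈ M <;> simp [h]

/-- Number of independent dressed logical operators supported in `M`. -/
noncomputable def lM (G : Submodule F2 (PauliSpace Q)) (M : Finset Q) : ℕ :=
  Module.finrank F2 ↥(pcent ((pstab G).map (projL M)) ⊓ PMod M)
    - Module.finrank F2 ↥(G ⊓ PMod M)

/-- Number of independent bare logical operators supported in `M`. -/
noncomputable def lbareM (G : Submodule F2 (PauliSpace Q)) (M : Finset Q) : ℕ :=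
  Module.finrank F2 ↥(pcent (G.map (projL M)) ⊓ PMod M)
    - Module.finrank F2 ↥(pstab G ⊓ PMod M)

end Pauli

section Classical

variable {ι : Type} [Fintype ι] [DecidableEq ι]

/-- Hamming weight of a classical vector. -/
def hwt (v : ι → F2) : ℕ := (Finset.univ.filter (fun i => v i ≠ 0)).card

/-- Row space of a matrix. -/
def Crow (A : Matrix ι ι F2) : Submodule F2 (ι → F2) := Submodule.span F2 (Set.range A)

/-- Column space of a matrix. -/
def Ccol (A : Matrix ι ι F2) : Submodule F2 (ι → F2) := Submodule.span F2 (Set.range Aᵀ)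

/-- Minimum distance of the row space. -/
noncomputable def drow (A : Matrix ι ι F2) : ℕ := sInf {w | ∃ v ∈ Crow A, v ≠ 0 ∧ hwt v = w}

/-- Minimum distance of the column space. -/
noncomputable def dcol (A : Matrix ι ι F2) : ℕ := sInf {w | ∃ v ∈ Ccol A, v ≠ 0 ∧ hwt v = w}

/-- Number of nonzero entries of a matrix. -/
def nnz (A : Matrix ι ι F2) : ℕ :=
  (Finset.univ.filter (fun p : ι × ι => A p.1 p.2 ≠ 0)).card

end Classical

section BaconShor

variable {m : ℕ}

/-- Qubit set of the generalized Bacon-Shor code: cells with `A i j = 1`. -/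
abbrev QA (A : Matrix (Fin m) (Fin m) F2) : Type := {c : Fin m × Fin m // A c.1 c.2 = 1}

/-- Generators of the gauge group. -/
def gaugeSet (A : Matrix (Fin m) (Fin m) F2) : Set (PauliSpace (QA A)) :=
  {v | ∃ c c' : QA A, c ≠ c' ∧
    ((c.1.1 = c'.1.1 ∧ v = Xop c + Xop c') ∨ (c.1.2 = c'.1.2 ∧ v = Zop c + Zop c'))}

/-- Gauge group of the generalized Bacon-Shor code. -/
def gaugeBS (A : Matrix (Fin m) (Fin m) F2) : Submodule F2 (PauliSpace (QA A)) :=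
  Submodule.span F2 (gaugeSet A)

/-- The row operator `R i`. -/
def Rop (A : Matrix (Fin m) (Fin m) F2) (i : Fin m) : PauliSpace (QA A) :=
  ∑ c ∈ Finset.univ.filter (fun c : QA A => c.1.1 = i), Zop c

/-- The column operator `C j`. -/
def Cop (A : Matrix (Fin m) (Fin m) F2) (j : Fin m) : PauliSpace (QA A) :=
  ∑ c ∈ Finset.univ.filter (fun c : QA A => c.1.2 = j), Xop c

/-- X-type operator parameterized by a binary vector. -/
def PXop (A : Matrix (Fin m) (Fin m) F2) (x : Fin m → F2) : PauliSpace (QA A) :=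
  ∑ j, x j • Cop A j

/-- Z-type operator parameterized by a binary vector. -/
def PZop (A : Matrix (Fin m) (Fin m) F2) (z : Fin m → F2) : PauliSpace (QA A) :=
  ∑ i, z i • Rop A i

end BaconShor

/-- Binary entropy. -/
noncomputable def H2 (p : ℝ) : ℝ := -p * Real.logb 2 p - (1 - p) * Real.logb 2 (1 - p)
/-- A finite set of lattice sites is contained in some square box of size `r × r`. -/
def InBox {L : ℕ} (r : ℕ) (S : Finset (Fin L × Fin L)) : Prop :=
  ∃ a b : ℕ, ∀ p ∈ S, a ≤ (p.1 : ℕ) ∧ (p.1 : ℕ) < a + r ∧ b ≤ (p.2 : ℕ) ∧ (p.2 : ℕ) < b + r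

/-- A subspace has spatially local generators with interaction range `r`: it is spanned
by vectors each supported in some square box of size `r × r`. -/
def HasLocalGens {L : ℕ} (r : ℕ) (G : Submodule F2 (PauliSpace (Fin L × Fin L))) : Prop :=
  ∃ gens : Set (PauliSpace (Fin L × Fin L)),
    G = Submodule.span F2 gens ∧ ∀ g ∈ gens, InBox r (psupp g)

/-- Cardinality of the boundary `∂M`: the set of sites outside `M` within Chebyshev
distance `r` of some site of `M`. -/
noncomputable def bdryCard {L : ℕ} (r : ℕ) (M : Finset (Fin L × Fin L)) : ℕ :=
  Nat.card {q : Fin L × Fin L // q ∉ M ∧ ∃ p ∈ M,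
    Nat.dist (q.1 : ℕ) (p.1 : ℕ) ≤ r ∧ Nat.dist (q.2 : ℕ) (p.2 : ℕ) ≤ r}

/-! Call the sites of `A` at Chebyshev distance more than `r` from `Q ∖ A` the bulk of `A`;
the other sites of `A` form its inner boundary, which has `|∂(Q ∖ A)|` sites. A local generator
meeting the bulk is supported in `A`, so an operator supported in the bulk that commutes with
`G(A)` commutes with all of `G`, and as `l(A) = 0` it is a stabilizer. Since `ω` is nondegenerate
on operators supported in the bulk, the double-centralizer property then shows that every
`P ∈ C(S)` agrees on the bulk with some `g ∈ G(A)`. If moreover `P` is supported in `A ∪ B`, then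
`P - g ∈ C(S)` is supported in `B` and the inner boundary, so its weight is below `d`; hence
`P - g ∈ G` and `P ∈ G`. -/

section Pauli

variable {Q : Type} [Fintype Q] [DecidableEq Q]

lemma omegaF_comm (u v : PauliSpace Q) : omegaF u v = omegaF v u :=
  Finset.sum_congr rfl fun _ _ => by ring

def omegaB : LinearMap.BilinForm F2 (PauliSpace Q) :=
  LinearMap.mk₂ F2 omegaF omegaF_add_left omegaF_smul_left
    (fun u v w => by rw [omegaF_comm, omegaF_add_left, omegaF_comm v, omegaF_comm w])
    (fun c u w => by rw [omegaF_comm, omegaF_smul_left, omegaF_comm w, smul_eq_mul])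

lemma omegaB_apply (u v : PauliSpace Q) : omegaB u v = omegaF u v := rfl

lemma omegaB_isRefl : (omegaB : LinearMap.BilinForm F2 (PauliSpace Q)).IsRefl :=
  fun u v h => by rwa [omegaB_apply, omegaF_comm] at h

lemma mem_pcent_iff_le_ker {U : Submodule F2 (PauliSpace Q)} {v : PauliSpace Q} :
    v ∈ pcent U ↔ U ≤ LinearMap.ker (omegaB v) :=
  Iff.rfl

lemma mem_pcent_span {s : Set (PauliSpace Q)} {v : PauliSpace Q} :
    v ∈ pcent (Submodule.span F2 s) ↔ ∀ g ∈ s, omegaF v g = 0 := by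
  rw [mem_pcent_iff_le_ker, Submodule.span_le]
  rfl

lemma pcent_anti {U V : Submodule F2 (PauliSpace Q)} (h : U ≤ V) : pcent V ≤ pcent U :=
  fun _ hv g hg => hv g (h hg)

lemma le_pcent_pstab (G : Submodule F2 (PauliSpace Q)) : G ≤ pcent (pstab G) :=
  fun g hg s hs => by
    rw [omegaF_comm]
    exact hs.2 g hg

lemma omegaF_Xop (v : PauliSpace Q) (c : Q) : omegaF v (Xop c) = (v c).2 := by
  rw [omegaF, Finset.sum_eq_single c] <;> simp +contextual [Xop]

lemma omegaF_Zop (v : PauliSpace Q) (c : Q) : omegaF v (Zop c) = (v c).1 := by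
  rw [omegaF, Finset.sum_eq_single c] <;> simp +contextual [Zop]

lemma PMod_mono {M N : Finset Q} (h : M ⊆ N) : PMod M ≤ PMod N :=
  fun _ hv q hq => hv q fun hqM => hq (h hqM)

lemma Xop_mem_PMod {N : Finset Q} {c : Q} (hc : c ∈ N) : Xop c ∈ PMod N := fun q hq => by
  simp [Xop, show q ≠ c by rintro rfl; exact hq hc]

lemma Zop_mem_PMod {N : Finset Q} {c : Q} (hc : c ∈ N) : Zop c ∈ PMod N := fun q hq => by
  simp [Zop, show q ≠ c by rintro rfl; exact hq hc]

lemma mem_psupp {v : PauliSpace Q} {q : Q} : q ∈ psupp v ↔ v q ≠ 0 := by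
  simp [psupp, Prod.zero_eq_mk]

lemma pwt_le_card {M : Finset Q} {v : PauliSpace Q} (hv : v ∈ PMod M) : pwt v ≤ M.card :=
  Finset.card_le_card fun q hq => by
    by_contra hqM
    exact mem_psupp.1 hq (hv q hqM)

lemma omegaF_eq_zero_of_mem_PMod {N : Finset Q} {v g : PauliSpace Q} (hv : v ∈ PMod N)
    (hg : ∀ q ∈ N, g q = 0) : omegaF v g = 0 := by
  refine Finset.sum_eq_zero fun q _ => ?_
  by_cases hq : q ∈ N
  · simp [hg q hq]
  · simp [hv q hq]

lemma projL_mem_PMod (M : Finset Q) (v : PauliSpace Q) : projL M v ∈ PMod M := fun q hq => by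
  simp [projL, hq]

lemma omegaF_projL {M : Finset Q} {v : PauliSpace Q} (hv : v ∈ PMod M) (s : PauliSpace Q) :
    omegaF v (projL M s) = omegaF v s := by
  refine Finset.sum_congr rfl fun q _ => ?_
  by_cases hq : q ∈ M
  · simp [projL, hq]
  · simp [projL, hq, hv q hq]

lemma sub_mem_PMod_sdiff {M N : Finset Q} {u w : PauliSpace Q} (hu : u ∈ PMod M)
    (hw : w ∈ PMod M) (h : projL N u = projL N w) : u - w ∈ PMod (M \ N) := fun q hq => by
  by_cases hqN : q ∈ N
  · simpa [projL, hqN, sub_eq_zero] using congrFun h q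
  · have hqM : q ∉ M := fun hqM => hq (Finset.mem_sdiff.2 ⟨hqM, hqN⟩)
    simp [hu q hqM, hw q hqM]

lemma pcent_inf_PMod_le_pcent_map (H : Submodule F2 (PauliSpace Q)) (M : Finset Q) :
    pcent H ⊓ PMod M ≤ pcent (H.map (projL M)) := by
  rintro v ⟨hvH, hvM⟩ _ ⟨s, hs, rfl⟩
  rw [omegaF_projL hvM]
  exact hvH s hs

lemma mem_pcent_of_mem_pcent_map {H : Submodule F2 (PauliSpace Q)} {M : Finset Q}
    {v : PauliSpace Q} (hv : v ∈ PMod M) (h : v ∈ pcent (H.map (projL M))) : v ∈ pcent H :=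
  fun s hs => by
    rw [← omegaF_projL hv]
    exact h _ (Submodule.mem_map_of_mem hs)

lemma omegaB_restrict_PMod_nondegenerate (N : Finset Q) :
    (omegaB.restrict (PMod N)).Nondegenerate := by
  refine (omegaB_isRefl.domRestrict _).nondegenerate_iff_separatingLeft.2 ?_
  rintro ⟨v, hv⟩ hvN
  ext q : 2
  by_cases hq : q ∈ N
  · have hX : omegaF v (Xop q) = 0 := hvN ⟨Xop q, Xop_mem_PMod hq⟩
    have hZ : omegaF v (Zop q) = 0 := hvN ⟨Zop q, Zop_mem_PMod hq⟩
    rw [omegaF_Xop] at hX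
    rw [omegaF_Zop] at hZ
    exact Prod.ext hZ hX
  · exact hv q hq

lemma pcent_pcent_inf_PMod_le {N : Finset Q} {U : Submodule F2 (PauliSpace Q)}
    (hU : U ≤ PMod N) : pcent (pcent U ⊓ PMod N) ⊓ PMod N ≤ U := by
  rintro p ⟨hp, hpN⟩
  set B := omegaB.restrict (PMod N)
  have hpY : (⟨p, hpN⟩ : PMod N) ∈ B.orthogonal (B.orthogonal (U.comap (PMod N).subtype)) := by
    rintro ⟨v, hvN⟩ hv
    have hvU : v ∈ pcent U := fun u hu => by
      rw [omegaF_comm]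
      exact hv ⟨u, hU hu⟩ hu
    change omegaF v p = 0
    rw [omegaF_comm]
    exact hp v ⟨hvU, hvN⟩
  rw [LinearMap.BilinForm.orthogonal_orthogonal (omegaB_restrict_PMod_nondegenerate N)
    (omegaB_isRefl.domRestrict _)] at hpY
  exact hpY

lemma lM_eq_zero_iff {G : Submodule F2 (PauliSpace Q)} {M : Finset Q} :
    lM G M = 0 ↔ pcent ((pstab G).map (projL M)) ⊓ PMod M ≤ G := by
  have hGM : G ⊓ PMod M ≤ pcent ((pstab G).map (projL M)) ⊓ PMod M := fun v hv =>
    ⟨pcent_inf_PMod_le_pcent_map _ M ⟨le_pcent_pstab G hv.1, hv.2⟩, hv.2⟩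
  rw [lM, Nat.sub_eq_zero_iff_le]
  constructor
  · intro h
    rw [← Submodule.eq_of_le_of_finrank_le hGM h]
    exact inf_le_left
  · intro h
    exact Submodule.finrank_mono fun v hv => ⟨h hv, hv.2⟩

lemma mem_of_pwt_lt {G : Submodule F2 (PauliSpace Q)} {v : PauliSpace Q}
    (hv : v ∈ pcent (pstab G)) (h : pwt v < sInf (distSet G)) : v ∈ G := by
  by_contra hvG
  exact (Nat.sInf_le (show pwt v ∈ distSet G from ⟨v, hv, hvG, rfl⟩)).not_gt h

end Pauli

section Lattice

variable {L : ℕ}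

def innerBoundary (r : ℕ) (A : Finset (Fin L × Fin L)) : Finset (Fin L × Fin L) :=
  A.filter fun q => ∃ p ∉ A, Nat.dist (q.1 : ℕ) p.1 ≤ r ∧ Nat.dist (q.2 : ℕ) p.2 ≤ r

def bulk (r : ℕ) (A : Finset (Fin L × Fin L)) : Finset (Fin L × Fin L) :=
  A \ innerBoundary r A

lemma card_innerBoundary (r : ℕ) (A : Finset (Fin L × Fin L)) :
    (innerBoundary r A).card = bdryCard r Aᶜ := by
  rw [bdryCard, Nat.card_eq_fintype_card, Fintype.card_subtype, innerBoundary]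
  congr 1
  ext q
  simp

lemma card_union_sdiff_bulk_le (r : ℕ) (A B : Finset (Fin L × Fin L)) :
    ((A ∪ B) \ bulk r A).card ≤ B.card + (innerBoundary r A).card := by
  refine (Finset.card_le_card fun q hq => ?_).trans (Finset.card_union_le _ _)
  simp only [bulk, Finset.mem_sdiff, Finset.mem_union, not_and, not_not] at hq ⊢
  tauto

lemma InBox.dist_le {r : ℕ} {S : Finset (Fin L × Fin L)} (h : InBox r S) {p q : Fin L × Fin L}
    (hp : p ∈ S) (hq : q ∈ S) : Nat.dist (p.1 : ℕ) q.1 ≤ r ∧ Nat.dist (p.2 : ℕ) q.2 ≤ r := by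
  obtain ⟨a, b, hbox⟩ := h
  have := hbox p hp
  have := hbox q hq
  constructor <;> · simp only [Nat.dist]; omega

lemma InBox.mem_PMod_or_eq_zero_on_bulk {r : ℕ} {g : PauliSpace (Fin L × Fin L)}
    (h : InBox r (psupp g)) (A : Finset (Fin L × Fin L)) :
    g ∈ PMod A ∨ ∀ q ∈ bulk r A, g q = 0 := by
  by_contra! ⟨hgA, q, hq, hgq⟩
  obtain ⟨p, hpA, hgp⟩ : ∃ p ∉ A, g p ≠ 0 := by simpa [PMod] using hgA
  obtain ⟨hqA, hq⟩ := Finset.mem_sdiff.1 hq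
  exact hq (Finset.mem_filter.2
    ⟨hqA, p, hpA, h.dist_le (mem_psupp.2 hgq) (mem_psupp.2 hgp)⟩)

lemma mem_pcent_of_mem_pcent_inf_PMod {r : ℕ} {G : Submodule F2 (PauliSpace (Fin L × Fin L))}
    (hloc : HasLocalGens r G) {A : Finset (Fin L × Fin L)} {v : PauliSpace (Fin L × Fin L)}
    (hv : v ∈ PMod (bulk r A)) (hvA : v ∈ pcent (G ⊓ PMod A)) : v ∈ pcent G := by
  obtain ⟨gens, rfl, hgens⟩ := hloc
  refine mem_pcent_span.2 fun g hg => ?_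
  rcases (hgens g hg).mem_PMod_or_eq_zero_on_bulk A with hgA | hg0
  · exact hvA g ⟨Submodule.subset_span hg, hgA⟩
  · exact omegaF_eq_zero_of_mem_PMod hv hg0

theorem exists_mem_inf_PMod_projL_bulk_eq {r : ℕ}
    {G : Submodule F2 (PauliSpace (Fin L × Fin L))} (hloc : HasLocalGens r G)
    {A : Finset (Fin L × Fin L)} (hA : lM G A = 0) {P : PauliSpace (Fin L × Fin L)}
    (hP : P ∈ pcent (pstab G)) :
    ∃ g ∈ G ⊓ PMod A, projL (bulk r A) g = projL (bulk r A) P := by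
  have hU : (G ⊓ PMod A).map (projL (bulk r A)) ≤ PMod (bulk r A) := by
    rintro _ ⟨g, -, rfl⟩
    exact projL_mem_PMod _ g
  refine pcent_pcent_inf_PMod_le hU ⟨?_, projL_mem_PMod _ P⟩
  rintro v ⟨hvU, hvN⟩
  have hvG : v ∈ pcent G := mem_pcent_of_mem_pcent_inf_PMod hloc hvN
    (mem_pcent_of_mem_pcent_map hvN hvU)
  have hvA : v ∈ PMod A := PMod_mono Finset.sdiff_subset hvN
  have hvS : v ∈ pstab G := ⟨lM_eq_zero_iff.1 hA
    ⟨pcent_inf_PMod_le_pcent_map _ A ⟨pcent_anti inf_le_left hvG, hvA⟩, hvA⟩, hvG⟩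
  rw [omegaF_comm, omegaF_projL hvN, omegaF_comm]
  exact hP v hvS

end Lattice

theorem no_logical_in_union_general {L : ℕ} (r : ℕ)
    (G : Submodule F2 (PauliSpace (Fin L × Fin L)))
    (hloc : HasLocalGens r G)
    (d : ℕ) (hd : d = sInf (distSet G))
    (A B : Finset (Fin L × Fin L))
    (hA : lM G A = 0) (hB : B.card + bdryCard r Aᶜ < d) :
    lM G (A ∪ B) = 0 := by
  refine lM_eq_zero_iff.2 ?_
  rintro P ⟨hPc, hPM⟩
  have hPS : P ∈ pcent (pstab G) := mem_pcent_of_mem_pcent_map hPM hPc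
  obtain ⟨g, hg, hgP⟩ := exists_mem_inf_PMod_projL_bulk_eq hloc hA hPS
  have hPg : P - g ∈ PMod ((A ∪ B) \ bulk r A) :=
    sub_mem_PMod_sdiff hPM (PMod_mono Finset.subset_union_left hg.2) hgP.symm
  have hwt : pwt (P - g) < sInf (distSet G) := calc
    pwt (P - g) ≤ ((A ∪ B) \ bulk r A).card := pwt_le_card hPg
    _ ≤ B.card + (innerBoundary r A).card := card_union_sdiff_bulk_le r A B
    _ < sInf (distSet G) := by rwa [card_innerBoundary, ← hd]
  have hPgG : P - g ∈ G := mem_of_pwt_lt (sub_mem hPS (le_pcent_pstab G hg.1)) hwt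
  simpa using add_mem hPgG hg.1

/-- Lemma 5 of the paper: if `l(A) = 0` and `|B| + |∂(Q∖A)| < d` for disjoint subsets
`A, B` of the lattice, then `l(A ∪ B) = 0`. -/
theorem no_logical_in_union {L : ℕ} (r : ℕ) (hr : 0 < r)
    (G : Submodule F2 (PauliSpace (Fin L × Fin L)))
    (hloc : HasLocalGens r G)
    (hlog : Module.finrank F2 ↥(pstab G) < Module.finrank F2 ↥(pcent G))
    (d : ℕ) (hd : d = sInf (distSet G))
    (A B : Finset (Fin L × Fin L)) (hAB : Disjoint A B)
    (hA : lM G A = 0) (hB : B.card + bdryCard r Aᶜ < d) :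
    lM G (A ∪ B) = 0 :=
  no_logical_in_union_general r G hloc d hd A B hA hB
end

section
/- Holographic principle for error correction: for every positive integer r there exists a constant c > 0 such that the following holds. For every L and every subspace G ≤ V(Q) on the qubit set Q = Fin L × Fin L that is spanned by generators each supported in some square box of size r×r, has at least one logical qubit, and has distance d: every square box M ⊆ Q of size R×R with R ≤ c·d satisfies l(M) = 0, i.e. no dressed logical operator is supported inside M. -/
set_option linter.unusedSectionVars false

open Finset Matrix

/-!
Call `M` correctable when every dressed logical operator supported in `M` lies in `G`; then
`l(M) = 0`, and every region with fewer than `d` qubits is correctable. If `A` and `M \ A` are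
correctable and every generator meeting `A` is supported in `M`, then `M` is correctable: a
dressed logical operator on `M` agrees on `A` with a gauge operator supported in `M`, and
subtracting it leaves one on `M \ A`. An `R × R` box with `8rR ≤ d` is then correctable by
induction, peeling off a frame of width `r`, which has at most `2r(w + h) < d` qubits.
-/

section Symplectic

variable {Q : Type} [Fintype Q] [DecidableEq Q]

lemma omegaF_add_right (u v w : PauliSpace Q) :
    omegaF u (v + w) = omegaF u v + omegaF u w := by
  rw [omegaF_comm, omegaF_add_left, omegaF_comm v, omegaF_comm w]

lemma omegaF_smul_right (c : F2) (u w : PauliSpace Q) :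
    omegaF u (c • w) = c * omegaF u w := by
  rw [omegaF_comm, omegaF_smul_left, omegaF_comm]

def symplecticForm : LinearMap.BilinForm F2 (PauliSpace Q) :=
  LinearMap.mk₂ F2 omegaF omegaF_add_left omegaF_smul_left omegaF_add_right omegaF_smul_right

lemma symplecticForm_isSymm : (symplecticForm (Q := Q)).IsSymm :=
  LinearMap.BilinForm.isSymm_def.mpr omegaF_comm

lemma symplecticForm_nondegenerate : (symplecticForm (Q := Q)).Nondegenerate := by
  refine (symplecticForm_isSymm.isRefl.nondegenerate_iff_separatingLeft).mpr fun v hv => ?_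
  funext q
  exact Prod.ext ((omegaF_Zop v q).symm.trans (hv (Zop q)))
    ((omegaF_Xop v q).symm.trans (hv (Xop q)))

lemma pcent_eq_orthogonal (W : Submodule F2 (PauliSpace Q)) :
    pcent W = symplecticForm.orthogonal W := by
  ext v
  exact forall₂_congr fun g _ => by rw [omegaF_comm]; rfl

lemma pcent_pcent (W : Submodule F2 (PauliSpace Q)) : pcent (pcent W) = W := by
  rw [pcent_eq_orthogonal, pcent_eq_orthogonal]
  exact LinearMap.BilinForm.orthogonal_orthogonal symplecticForm_nondegenerate
    symplecticForm_isSymm.isRefl W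

lemma pcent_antitone : Antitone (pcent (Q := Q)) :=
  fun _ _ h _ hv g hg => hv g (h hg)

lemma pcent_sup (W₁ W₂ : Submodule F2 (PauliSpace Q)) :
    pcent (W₁ ⊔ W₂) = pcent W₁ ⊓ pcent W₂ := by
  refine le_antisymm (le_inf (pcent_antitone le_sup_left) (pcent_antitone le_sup_right)) ?_
  rintro v ⟨hv₁, hv₂⟩ g hg
  obtain ⟨x, hx, y, hy, rfl⟩ := Submodule.mem_sup.mp hg
  rw [omegaF_add_right, hv₁ x hx, hv₂ y hy, add_zero]

lemma pcent_inf (W₁ W₂ : Submodule F2 (PauliSpace Q)) :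
    pcent (W₁ ⊓ W₂) = pcent W₁ ⊔ pcent W₂ := by
  rw [← pcent_pcent (pcent W₁ ⊔ pcent W₂), pcent_sup, pcent_pcent, pcent_pcent]

end Symplectic

section Support

variable {Q : Type} [Fintype Q] [DecidableEq Q]

lemma mem_PMod_iff_psupp_subset {M : Finset Q} {v : PauliSpace Q} :
    v ∈ PMod M ↔ psupp v ⊆ M := by
  refine ⟨fun hv q hq => ?_, fun hv q hq => ?_⟩
  · by_contra hqM
    exact (Finset.mem_filter.mp hq).2 (hv q hqM)
  · by_contra hvq
    exact hq (hv (Finset.mem_filter.mpr ⟨Finset.mem_univ q, hvq⟩))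

lemma PMod_empty : PMod (∅ : Finset Q) = ⊥ :=
  eq_bot_iff.mpr fun _ hv => funext fun q => hv q (Finset.notMem_empty q)

lemma PMod_compl_inf_PMod (M : Finset Q) : PMod Mᶜ ⊓ PMod M = ⊥ := by
  rw [eq_bot_iff]
  rintro v ⟨hv₁, hv₂⟩
  funext q
  by_cases hq : q ∈ M
  · exact hv₁ q (Finset.notMem_compl.mpr hq)
  · exact hv₂ q hq

lemma projL_eq_zero_iff {A : Finset Q} {v : PauliSpace Q} :
    projL A v = 0 ↔ Disjoint (psupp v) A := by
  rw [Finset.disjoint_right, funext_iff]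
  refine forall_congr' fun q => ?_
  by_cases hq : q ∈ A <;> simp [projL, psupp, hq, Prod.mk_zero_zero]

lemma map_projL_le_PMod (W : Submodule F2 (PauliSpace Q)) (M : Finset Q) :
    W.map (projL M) ≤ PMod M := by
  rintro _ ⟨w, _, rfl⟩ q hq
  simp [projL, hq]

lemma pcent_PMod (M : Finset Q) : pcent (PMod M) = PMod Mᶜ := by
  ext v
  refine ⟨fun hv q hq => ?_, fun hv g hg => Finset.sum_eq_zero fun q _ => ?_⟩
  · have hne : ∀ p ∉ M, p ≠ q := fun p hp hpq => hp (hpq ▸ by simpa using hq)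
    exact Prod.ext ((omegaF_Zop v q).symm.trans (hv _ fun p hp => by simp [Zop, hne p hp]))
      ((omegaF_Xop v q).symm.trans (hv _ fun p hp => by simp [Xop, hne p hp]))
  · by_cases hq : q ∈ M
    · simp [hv q (Finset.notMem_compl.mpr hq)]
    · simp [hg q hq]

end Support

section RelativeCentralizer

variable {Q : Type} [Fintype Q] [DecidableEq Q]

def pcentIn (M : Finset Q) (W : Submodule F2 (PauliSpace Q)) : Submodule F2 (PauliSpace Q) :=
  pcent W ⊓ PMod M

lemma pcentIn_antitone (M : Finset Q) : Antitone (pcentIn M) :=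
  fun _ _ h => inf_le_inf_right _ (pcent_antitone h)

lemma pcentIn_pcentIn {M : Finset Q} {Y : Submodule F2 (PauliSpace Q)} (hY : Y ≤ PMod M) :
    pcentIn M (pcentIn M Y) = Y := by
  rw [pcentIn, pcentIn, pcent_inf, pcent_pcent, pcent_PMod, sup_inf_assoc_of_le _ hY,
    PMod_compl_inf_PMod, sup_bot_eq]

lemma omegaF_projL_right {M : Finset Q} {v : PauliSpace Q} (hv : v ∈ PMod M)
    (x : PauliSpace Q) : omegaF v (projL M x) = omegaF v x := by
  refine Finset.sum_congr rfl fun q _ => ?_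
  by_cases hq : q ∈ M
  · simp [projL, hq]
  · simp [hv q hq]

lemma pcentIn_map_projL (M : Finset Q) (W : Submodule F2 (PauliSpace Q)) :
    pcentIn M (W.map (projL M)) = pcentIn M W := by
  ext v
  simp only [pcentIn, Submodule.mem_inf, and_congr_left_iff]
  intro hv
  refine ⟨fun h g hg => ?_, ?_⟩
  · exact (omegaF_projL_right hv g).symm.trans (h _ (Submodule.mem_map_of_mem hg))
  · rintro h _ ⟨g, hg, rfl⟩
    exact (omegaF_projL_right hv g).trans (h g hg)

lemma map_projL_le_of_pcentIn_le {A : Finset Q} {W₁ W₂ : Submodule F2 (PauliSpace Q)}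
    (h : pcentIn A W₂ ≤ pcentIn A W₁) : W₁.map (projL A) ≤ W₂.map (projL A) := by
  rw [← pcentIn_pcentIn (map_projL_le_PMod W₁ A), ← pcentIn_pcentIn (map_projL_le_PMod W₂ A),
    pcentIn_map_projL, pcentIn_map_projL]
  exact pcentIn_antitone A h

end RelativeCentralizer

section Correctable

variable {Q : Type} [Fintype Q] [DecidableEq Q]

def IsCorrectable (G : Submodule F2 (PauliSpace Q)) (M : Finset Q) : Prop :=
  pcent (pstab G) ⊓ PMod M ≤ G

variable {G : Submodule F2 (PauliSpace Q)}

lemma IsCorrectable.mono {M N : Finset Q} (hN : IsCorrectable G N) (h : M ⊆ N) :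
    IsCorrectable G M :=
  (inf_le_inf_left _ (PMod_mono h)).trans hN

lemma isCorrectable_empty : IsCorrectable G ∅ := by
  simp [IsCorrectable, PMod_empty]

lemma isCorrectable_of_card_lt {M : Finset Q} (h : M.card < sInf (distSet G)) :
    IsCorrectable G M := by
  rintro v ⟨hv, hvM⟩
  by_contra hvG
  have hd : sInf (distSet G) ≤ pwt v := Nat.sInf_le ⟨v, hv, hvG, rfl⟩
  exact absurd (hd.trans (pwt_le_card hvM)) h.not_ge

lemma lM_eq_zero_of_isCorrectable {M : Finset Q} (h : IsCorrectable G M) : lM G M = 0 := by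
  have hlog : pcentIn M ((pstab G).map (projL M)) = G ⊓ PMod M := by
    rw [pcentIn_map_projL]
    exact le_antisymm (le_inf h inf_le_right) (inf_le_inf_right _ (le_pcent_pstab G))
  rw [lM, show pcent ((pstab G).map (projL M)) ⊓ PMod M = G ⊓ PMod M from hlog, Nat.sub_self]

/-- Cleaning: on a correctable region, a dressed logical operator agrees with a gauge
operator. -/
lemma IsCorrectable.map_projL_le {A : Finset Q} (hA : IsCorrectable G A) :
    (pcent (pstab G)).map (projL A) ≤ G.map (projL A) := by
  refine map_projL_le_of_pcentIn_le ?_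
  rw [pcentIn, pcentIn, pcent_pcent]
  rintro v ⟨hvG, hvA⟩
  exact ⟨⟨hA ⟨pcent_antitone inf_le_left hvG, hvA⟩, hvG⟩, hvA⟩

lemma map_projL_span_le {gens : Set (PauliSpace Q)} {A M : Finset Q}
    (hloc : ∀ g ∈ gens, ¬Disjoint (psupp g) A → psupp g ⊆ M) :
    (Submodule.span F2 gens).map (projL A) ≤
      (Submodule.span F2 gens ⊓ PMod M).map (projL A) := by
  rw [Submodule.map_span, Submodule.span_le]
  rintro _ ⟨g, hg, rfl⟩
  by_cases hgA : Disjoint (psupp g) A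
  · rw [projL_eq_zero_iff.mpr hgA]
    exact zero_mem _
  · exact Submodule.mem_map_of_mem
      ⟨Submodule.subset_span hg, mem_PMod_iff_psupp_subset.mpr (hloc g hg hgA)⟩

lemma IsCorrectable.of_sdiff {gens : Set (PauliSpace Q)} {A M : Finset Q}
    (hloc : ∀ g ∈ gens, ¬Disjoint (psupp g) A → psupp g ⊆ M)
    (hA : IsCorrectable (Submodule.span F2 gens) A)
    (hMA : IsCorrectable (Submodule.span F2 gens) (M \ A)) :
    IsCorrectable (Submodule.span F2 gens) M := by
  rintro v ⟨hv, hvM⟩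
  obtain ⟨g, ⟨hg, hgM⟩, hgv⟩ := map_projL_span_le hloc (hA.map_projL_le ⟨v, hv, rfl⟩)
  have hcleaned : v - g ∈ pcent (pstab (Submodule.span F2 gens)) ⊓ PMod (M \ A) := by
    refine ⟨sub_mem hv (le_pcent_pstab _ hg), fun q hq => ?_⟩
    by_cases hqA : q ∈ A
    · have hgq : g q = v q := by simpa [projL, hqA] using congrFun hgv q
      simp [hgq]
    · have hqM : q ∉ M := fun hqM => hq (Finset.mem_sdiff.mpr ⟨hqM, hqA⟩)
      simp [hvM q hqM, hgM q hqM]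
  simpa using add_mem (hMA hcleaned) hg

end Correctable

section Lattice

variable {L : ℕ}

def rect (a b w h : ℕ) : Finset (Fin L × Fin L) :=
  Finset.univ.filter fun p => (p.1 : ℕ) ∈ Finset.Ico a (a + w) ∧ (p.2 : ℕ) ∈ Finset.Ico b (b + h)

lemma mem_rect {a b w h : ℕ} {p : Fin L × Fin L} :
    p ∈ rect a b w h ↔ a ≤ p.1 ∧ (p.1 : ℕ) < a + w ∧ b ≤ p.2 ∧ (p.2 : ℕ) < b + h := by
  simp [rect, and_assoc]

lemma card_rect_le (a b w h : ℕ) : (rect a b w h : Finset (Fin L × Fin L)).card ≤ w * h := by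
  calc (rect a b w h : Finset (Fin L × Fin L)).card
      ≤ (Finset.Ico a (a + w) ×ˢ Finset.Ico b (b + h)).card := by
        refine Finset.card_le_card_of_injOn (fun p => ((p.1 : ℕ), (p.2 : ℕ))) ?_ ?_
        · intro p hp
          simpa [rect] using hp
        · intro p _ p' _ hpp'
          simp only [Prod.mk.injEq] at hpp'
          exact Prod.ext (Fin.ext hpp'.1) (Fin.ext hpp'.2)
    _ = w * h := by simp

lemma InBox.subset_rect {R : ℕ} {S : Finset (Fin L × Fin L)} (hS : InBox R S) :
    ∃ a b, S ⊆ rect a b R R := by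
  obtain ⟨a, b, hab⟩ := hS
  exact ⟨a, b, fun p hp => mem_rect.mpr (hab p hp)⟩

lemma InBox.subset_rect_of_not_disjoint {r a b w h : ℕ} {S : Finset (Fin L × Fin L)}
    (hS : InBox r S) (hmeet : ¬Disjoint S (rect (a + r) (b + r) w h)) :
    S ⊆ rect a b (w + 2 * r) (h + 2 * r) := by
  obtain ⟨a', b', hbox⟩ := hS
  obtain ⟨p, hpS, hp⟩ := Finset.not_disjoint_iff.mp hmeet
  intro q hq
  have := hbox p hpS
  have := hbox q hq
  rw [mem_rect] at hp ⊢
  omega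

lemma card_rect_sdiff_le (r a b w h : ℕ) :
    (rect a b (w + 2 * r) (h + 2 * r) \ rect (a + r) (b + r) w h :
      Finset (Fin L × Fin L)).card ≤ 2 * r * ((w + 2 * r) + (h + 2 * r)) := by
  have hframe : (rect a b (w + 2 * r) (h + 2 * r) \ rect (a + r) (b + r) w h :
      Finset (Fin L × Fin L)) ⊆ ((rect a b r (h + 2 * r) ∪ rect (a + r + w) b r (h + 2 * r)) ∪
        rect a b (w + 2 * r) r) ∪ rect a (b + r + h) (w + 2 * r) r := by
    intro p hp
    simp only [Finset.mem_sdiff, Finset.mem_union, mem_rect] at hp ⊢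
    omega
  grw [Finset.card_le_card hframe, Finset.card_union_le, Finset.card_union_le,
    Finset.card_union_le, card_rect_le, card_rect_le, card_rect_le, card_rect_le]
  apply le_of_eq
  ring

variable {r : ℕ} {gens : Set (PauliSpace (Fin L × Fin L))}

lemma isCorrectable_rect (hr : 0 < r) (hgens : ∀ g ∈ gens, InBox r (psupp g)) (w h a b : ℕ)
    (hD : 2 * r * (w + h) < sInf (distSet (Submodule.span F2 gens))) :
    IsCorrectable (Submodule.span F2 gens) (rect a b w h) := by
  induction w using Nat.strong_induction_on generalizing h a b with
  | _ w ih =>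
    by_cases hsmall : w ≤ 2 * r ∨ h ≤ 2 * r
    · refine isCorrectable_of_card_lt ((card_rect_le a b w h).trans_lt (lt_of_le_of_lt ?_ hD))
      rcases hsmall with hw | hh
      · nlinarith
      · nlinarith
    simp only [not_or, not_le] at hsmall
    obtain ⟨w, rfl⟩ : ∃ w', w = w' + 2 * r := ⟨w - 2 * r, by omega⟩
    obtain ⟨h, rfl⟩ : ∃ h', h = h' + 2 * r := ⟨h - 2 * r, by omega⟩
    refine IsCorrectable.of_sdiff (A := rect (a + r) (b + r) w h)
      (fun g hg hmeet => (hgens g hg).subset_rect_of_not_disjoint hmeet) ?inner ?frame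
    case inner =>
      exact ih w (by omega) h _ _ (lt_of_le_of_lt (Nat.mul_le_mul_left _ (by omega)) hD)
    case frame => exact isCorrectable_of_card_lt ((card_rect_sdiff_le r a b w h).trans_lt hD)

lemma isCorrectable_of_inBox (hr : 0 < r) (hgens : ∀ g ∈ gens, InBox r (psupp g)) {R : ℕ}
    (hR : 8 * r * R ≤ sInf (distSet (Submodule.span F2 gens))) {M : Finset (Fin L × Fin L)}
    (hM : InBox R M) : IsCorrectable (Submodule.span F2 gens) M := by
  obtain ⟨a, b, hMab⟩ := hM.subset_rect
  rcases Nat.eq_zero_or_pos R with rfl | hR₀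
  · exact isCorrectable_empty.mono (hMab.trans fun p hp => by simp [mem_rect] at hp; omega)
  · exact (isCorrectable_rect hr hgens R R a b (by nlinarith)).mono hMab

end Lattice

/-- Holographic principle for error correction (Lemma 4 of the paper): there is a
constant `c = c(r) > 0` such that no square box of size `R × R` with `R ≤ c·d`
supports a dressed logical operator. -/
theorem holographic_principle (r : ℕ) (hr : 0 < r) :
    ∃ c : ℝ, 0 < c ∧ ∀ L : ℕ, ∀ G : Submodule F2 (PauliSpace (Fin L × Fin L)),
      HasLocalGens r G →
      Module.finrank F2 ↥(pstab G) < Module.finrank F2 ↥(pcent G) →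
      ∀ d : ℕ, d = sInf (distSet G) →
      ∀ R : ℕ, (R : ℝ) ≤ c * d →
      ∀ M : Finset (Fin L × Fin L), InBox R M → lM G M = 0 := by
  refine ⟨1 / (8 * r), by positivity, ?_⟩
  rintro L G ⟨gens, rfl, hgens⟩ - d rfl R hR M hM
  refine lM_eq_zero_of_isCorrectable (isCorrectable_of_inBox hr hgens ?_ hM)
  rw [one_div_mul_eq_div, le_div_iff₀ (by positivity)] at hR
  have h8 : ((8 * r * R : ℕ) : ℝ) ≤ (sInf (distSet (Submodule.span F2 gens)) : ℕ) := by
    push_cast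
    linarith
  exact_mod_cast h8
end

section
/- For all positive integers r and r_s there exists a constant C such that the following holds. For every L and every subspace G ≤ V(Q) on the qubit set Q = Fin L × Fin L that is spanned by generators each supported in some square box of size r×r, and whose stabilizer S = G ∩ C(G) is spanned by generators each supported in some square box of size r_s×r_s, with k ≥ 1 logical qubits and distance d: k·d² ≤ C·L² (i.e. kd² = O(n) with n = L² the number of physical qubits). -/
set_option linter.unusedSectionVars false

open Finset Matrix

/-! Let `ρ` bound both interaction ranges. A region `M` is correctable when every dressed
logical operator supported on `M` is a gauge operator. By the cleaning lemma, if two correctable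
regions cover all qubits but a set `J`, then `k ≤ |J|`. Locality of the gauge generators lets a
rectangle grow column by column as long as its frame of width `ρ` has fewer than `d` qubits, so
rectangles of side about `d / ρ` are correctable; locality of the stabilizer generators makes
unions of correctable regions that are `ρ` apart correctable. Now tile the lattice by squares of
side about `d / (5ρ)` separated by corridors of width `ρ`: the squares form one correctable
region, the middle parts of the corridors another, and the `6ρ²` remaining sites per cell give
`k = O(ρ⁴ L² / d²)`. -/

namespace SubsystemCode

open Submodule Module

section Symplectic

variable {Q : Type} [Fintype Q] [DecidableEq Q]

lemma omegaF_comm (u v : PauliSpace Q) : omegaF u v = omegaF v u :=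
  Finset.sum_congr rfl fun _ _ => by ring

lemma omegaF_add_right (u v w : PauliSpace Q) :
    omegaF u (v + w) = omegaF u v + omegaF u w := by
  rw [omegaF_comm, omegaF_add_left, omegaF_comm v, omegaF_comm w]

lemma omegaF_smul_right (c : F2) (u w : PauliSpace Q) :
    omegaF u (c • w) = c * omegaF u w := by
  rw [omegaF_comm, omegaF_smul_left, omegaF_comm w]

noncomputable def omegaForm : LinearMap.BilinForm F2 (PauliSpace Q) :=
  LinearMap.mk₂ F2 omegaF omegaF_add_left omegaF_smul_left omegaF_add_right omegaF_smul_right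

lemma omegaForm_apply (u v : PauliSpace Q) : omegaForm u v = omegaF u v := rfl

lemma omegaF_sub_left (u v w : PauliSpace Q) :
    omegaF (u - v) w = omegaF u w - omegaF v w := by
  simp only [← omegaForm_apply, map_sub, LinearMap.sub_apply]

lemma omegaF_Xop (v : PauliSpace Q) (q : Q) : omegaF v (Xop q) = (v q).2 := by
  rw [omegaF, Finset.sum_eq_single q (fun p _ hp => by simp [Xop, hp]) (by simp)]
  simp [Xop]

lemma omegaF_Zop (v : PauliSpace Q) (q : Q) : omegaF v (Zop q) = (v q).1 := by
  rw [omegaF, Finset.sum_eq_single q (fun p _ hp => by simp [Zop, hp]) (by simp)]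
  simp [Zop]

lemma omegaForm_nondegenerate : (omegaForm (Q := Q)).Nondegenerate := by
  refine (LinearMap.IsRefl.nondegenerate_iff_separatingLeft
    fun u v h => by rwa [omegaForm_apply, omegaF_comm] at h).2 fun v hv => ?_
  funext q
  exact Prod.ext (by simpa [omegaForm_apply, omegaF_Zop] using hv (Zop q))
    (by simpa [omegaForm_apply, omegaF_Xop] using hv (Xop q))

lemma mem_pcent_span {v : PauliSpace Q} {s : Set (PauliSpace Q)} :
    v ∈ pcent (span F2 s) ↔ ∀ g ∈ s, omegaF v g = 0 :=
  span_le (p := LinearMap.ker (omegaForm v))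

lemma pcent_eq_orthogonal (W : Submodule F2 (PauliSpace Q)) :
    pcent W = omegaForm.orthogonal W := by
  ext v
  exact forall₂_congr fun g _ => by rw [omegaForm_apply, omegaF_comm]

lemma finrank_pcent (W : Submodule F2 (PauliSpace Q)) :
    finrank F2 (pcent W) = finrank F2 (PauliSpace Q) - finrank F2 W := by
  rw [pcent_eq_orthogonal, LinearMap.BilinForm.finrank_orthogonal omegaForm_nondegenerate]

lemma pcent_antitone {W W' : Submodule F2 (PauliSpace Q)} (h : W ≤ W') :
    pcent W' ≤ pcent W := fun _ hv g hg => hv g (h hg)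

lemma pcent_pcent (W : Submodule F2 (PauliSpace Q)) : pcent (pcent W) = W := by
  refine (eq_of_le_of_finrank_le (fun w hw g hg => ?_) ?_).symm
  · rw [omegaF_comm]; exact hg w hw
  · have := W.finrank_le
    rw [finrank_pcent, finrank_pcent]
    omega

lemma pcent_le_comm {W W' : Submodule F2 (PauliSpace Q)} : pcent W ≤ W' ↔ pcent W' ≤ W :=
  ⟨fun h => pcent_pcent W ▸ pcent_antitone h, fun h => pcent_pcent W' ▸ pcent_antitone h⟩

lemma pcent_sup (W W' : Submodule F2 (PauliSpace Q)) : pcent (W ⊔ W') = pcent W ⊓ pcent W' := by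
  refine le_antisymm (le_inf (pcent_antitone le_sup_left) (pcent_antitone le_sup_right)) ?_
  rintro v ⟨hv, hv'⟩ g hg
  obtain ⟨w, hw, w', hw', rfl⟩ := mem_sup.1 hg
  rw [omegaF_add_right, hv w hw, hv' w' hw', add_zero]

lemma finrank_pauliSpace : finrank F2 (PauliSpace Q) = 2 * Fintype.card Q := by
  rw [finrank_pi_fintype]
  simp [mul_comm]

end Symplectic

section Support

variable {Q : Type} [Fintype Q] [DecidableEq Q]

lemma mem_psupp {v : PauliSpace Q} {q : Q} : q ∈ psupp v ↔ v q ≠ 0 := by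
  simp only [psupp, Finset.mem_filter, Finset.mem_univ, true_and, Prod.zero_eq_mk]

lemma mem_PMod_iff {v : PauliSpace Q} {M : Finset Q} : v ∈ PMod M ↔ psupp v ⊆ M := by
  refine ⟨fun h q hq => ?_, fun h q hq => ?_⟩
  · by_contra hqM; exact mem_psupp.1 hq (h q hqM)
  · by_contra hv; exact hq (h (mem_psupp.2 hv))

lemma mem_PMod_psupp (v : PauliSpace Q) : v ∈ PMod (psupp v) := mem_PMod_iff.2 subset_rfl

lemma PMod_mono {M N : Finset Q} (h : M ⊆ N) : PMod M ≤ PMod N :=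
  fun _ hv q hq => hv q fun hqM => hq (h hqM)

lemma PMod_inf (M N : Finset Q) : PMod M ⊓ PMod N = PMod (M ∩ N) := by
  ext v
  simp only [Submodule.mem_inf, mem_PMod_iff, Finset.subset_inter_iff]

lemma span_le_PMod {s : Set (PauliSpace Q)} {M : Finset Q} (h : ∀ g ∈ s, psupp g ⊆ M) :
    span F2 s ≤ PMod M :=
  span_le.2 fun g hg => mem_PMod_iff.2 (h g hg)

lemma pcent_PMod (M : Finset Q) : pcent (PMod M) = PMod Mᶜ := by
  ext v
  refine ⟨fun hv q hq => ?_, fun hv w hw => ?_⟩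
  · have hqM : q ∈ M := by simpa using hq
    have hX : Xop q ∈ PMod M := fun p hp => by simp [Xop, show p ≠ q from fun h => hp (h ▸ hqM)]
    have hZ : Zop q ∈ PMod M := fun p hp => by simp [Zop, show p ≠ q from fun h => hp (h ▸ hqM)]
    exact Prod.ext (by simpa [omegaF_Zop] using hv _ hZ) (by simpa [omegaF_Xop] using hv _ hX)
  · refine Finset.sum_eq_zero fun q _ => ?_
    by_cases hq : q ∈ M
    · simp [hv q (by simpa using hq)]
    · simp [hw q hq]

lemma omegaF_eq_zero_of_disjoint {u w : PauliSpace Q} (h : Disjoint (psupp u) (psupp w)) :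
    omegaF u w = 0 := by
  have hu : u ∈ pcent (PMod (psupp w)) := by
    rw [pcent_PMod, mem_PMod_iff]
    exact Finset.subset_compl_iff_disjoint_right.2 h
  exact hu w (mem_PMod_psupp w)

lemma finrank_le_finrank_inf_PMod_compl_add (W : Submodule F2 (PauliSpace Q)) (J : Finset Q) :
    finrank F2 W ≤ finrank F2 ↥(W ⊓ PMod Jᶜ) + 2 * J.card := by
  let φ : PauliSpace Q →ₗ[F2] J → F2 × F2 := LinearMap.funLeft F2 (F2 × F2) Subtype.val
  have hker : LinearMap.ker φ = PMod Jᶜ := by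
    ext v
    simp only [LinearMap.mem_ker, funext_iff, Pi.zero_apply,
      Subtype.forall]
    exact ⟨fun h q hq => h q (by simpa using hq), fun h q hq => h q (by simpa using hq)⟩
  have h₁ := φ.finrank_range_add_finrank_ker
  have h₂ := (LinearMap.range φ).finrank_le
  have h₃ := finrank_sup_add_finrank_inf_eq W (PMod Jᶜ)
  have h₄ := (W ⊔ PMod Jᶜ).finrank_le
  rw [finrank_pauliSpace, Fintype.card_coe] at h₂
  rw [hker] at h₁
  omega

end Support

section Correctable

variable {Q : Type} [Fintype Q] [DecidableEq Q] {G : Submodule F2 (PauliSpace Q)}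
  {M N : Finset Q}

def IsCorrectable (G : Submodule F2 (PauliSpace Q)) (M : Finset Q) : Prop :=
  pcent (pstab G) ⊓ PMod M ≤ G

lemma pstab_le (G : Submodule F2 (PauliSpace Q)) : pstab G ≤ G := inf_le_left

lemma pstab_le_pcent (G : Submodule F2 (PauliSpace Q)) : pstab G ≤ pcent G := inf_le_right

lemma le_pcent_pstab (G : Submodule F2 (PauliSpace Q)) : G ≤ pcent (pstab G) :=
  fun g hg s hs => by rw [omegaF_comm]; exact hs.2 g hg

lemma isCorrectable_of_card_lt {d : ℕ} (hd : ∀ v ∈ pcent (pstab G), v ∉ G → d ≤ pwt v)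
    (hM : M.card < d) : IsCorrectable G M := by
  rintro v ⟨hv, hvM⟩
  by_contra hvG
  exact (hd v hv hvG).trans (Finset.card_le_card (mem_PMod_iff.1 hvM)) |>.not_gt hM

lemma IsCorrectable.pcent_inf_le (hM : IsCorrectable G M) : pcent G ⊓ PMod M ≤ pstab G :=
  fun _ hv => ⟨hM ⟨pcent_antitone (pstab_le G) hv.1, hv.2⟩, hv.1⟩

lemma IsCorrectable.pcent_pstab_le (hM : IsCorrectable G M) :
    pcent (pstab G) ≤ G ⊔ PMod Mᶜ := by
  rw [pcent_le_comm, pcent_sup, pcent_PMod, compl_compl]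
  exact hM.pcent_inf_le

lemma IsCorrectable.pcent_le (hM : IsCorrectable G M) : pcent G ≤ pstab G ⊔ PMod Mᶜ := by
  rw [pcent_le_comm, pcent_sup, pcent_PMod, compl_compl]
  exact hM

lemma le_card_of_finrank_pcent_eq {k : ℕ}
    (hk : finrank F2 (pcent G) = finrank F2 (pstab G) + 2 * k) : k ≤ Fintype.card Q := by
  have := (pcent G).finrank_le
  rw [finrank_pauliSpace] at this
  omega

/-- Every bare logical operator can be cleaned off `M₁`; if it then also vanishes on the
rest of the qubits it lives on `M₂`, so it is a stabilizer. -/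
theorem finrank_pcent_le {M₁ M₂ : Finset Q} (h₁ : IsCorrectable G M₁)
    (h₂ : IsCorrectable G M₂) :
    finrank F2 (pcent G) ≤ finrank F2 (pstab G) + 2 * (M₁ ∪ M₂)ᶜ.card := by
  set X := pcent G ⊓ PMod M₁ᶜ
  have hX : pcent G ≤ pstab G ⊔ X := by
    rw [show pstab G ⊔ X = (pstab G ⊔ PMod M₁ᶜ) ⊓ pcent G by
      rw [sup_inf_assoc_of_le _ (pstab_le_pcent G), inf_comm]]
    exact le_inf h₁.pcent_le le_rfl
  have hXJ : X ⊓ PMod (M₁ ∪ M₂)ᶜᶜ ≤ pstab G ⊓ X := by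
    refine le_inf (le_trans ?_ h₂.pcent_inf_le) inf_le_left
    rw [compl_compl, inf_assoc, PMod_inf]
    refine inf_le_inf_left _ (PMod_mono fun q hq => ?_)
    simp only [Finset.mem_inter, Finset.mem_compl, Finset.mem_union] at hq
    tauto
  have h₃ := finrank_mono hX
  have h₄ := finrank_sup_add_finrank_inf_eq (pstab G) X
  have h₅ := finrank_le_finrank_inf_PMod_compl_add X (M₁ ∪ M₂)ᶜ
  have h₆ := finrank_mono hXJ
  omega

/-- Each stabilizer generator sees only one of the parts of `v` on `M` and off `M`, so both
parts are dressed logical operators. -/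
theorem IsCorrectable.union {gens : Set (PauliSpace Q)} (hS : pstab G = span F2 gens)
    (hsep : ∀ g ∈ gens, Disjoint (psupp g) M ∨ Disjoint (psupp g) N)
    (hM : IsCorrectable G M) (hN : IsCorrectable G N) : IsCorrectable G (M ∪ N) := by
  rintro v ⟨hv, hvMN⟩
  set u := projL M v
  have hu : u ∈ PMod M := fun q hq => if_neg hq
  have hvu : v - u ∈ PMod N := fun q hq => by
    by_cases hqM : q ∈ M
    · simp [u, projL, hqM]
    · simp [u, projL, hqM, hvMN q (by simp [hqM, hq])]
  have hu_cent : u ∈ pcent (pstab G) := by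
    rw [hS, mem_pcent_span]
    intro g hg
    rcases hsep g hg with h | h
    · exact omegaF_eq_zero_of_disjoint (Finset.disjoint_of_subset_left (mem_PMod_iff.1 hu) h.symm)
    · have hv₀ : omegaF v g = 0 := hv g (hS ▸ subset_span hg)
      have hvu₀ : omegaF (v - u) g = 0 :=
        omegaF_eq_zero_of_disjoint (Finset.disjoint_of_subset_left (mem_PMod_iff.1 hvu) h.symm)
      rwa [omegaF_sub_left, hv₀, zero_sub, neg_eq_zero] at hvu₀
  simpa using add_mem (hM ⟨hu_cent, hu⟩) (hN ⟨sub_mem hv hu_cent, hvu⟩)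

theorem IsCorrectable.biUnion {ι : Type} [DecidableEq ι] {gens : Set (PauliSpace Q)}
    (hS : pstab G = span F2 gens) {s : Finset ι} {P : ι → Finset Q}
    (hsep : ∀ g ∈ gens, ∀ i ∈ s, ∀ j ∈ s, i ≠ j →
      Disjoint (psupp g) (P i) ∨ Disjoint (psupp g) (P j))
    (hP : ∀ i ∈ s, IsCorrectable G (P i)) : IsCorrectable G (s.biUnion P) := by
  induction s using Finset.induction_on with
  | empty =>
    intro v hv
    rw [show v = 0 from funext fun q => hv.2 q (by simp)]
    exact zero_mem G
  | insert a s has ih =>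
    rw [Finset.biUnion_insert]
    refine (hP a (s.mem_insert_self a)).union hS (fun g hg => ?_)
      (ih (fun g hg i hi j hj => hsep g hg i (s.mem_insert_of_mem hi) j
        (s.mem_insert_of_mem hj)) fun i hi => hP i (s.mem_insert_of_mem hi))
    by_cases ha : Disjoint (psupp g) (P a)
    · exact Or.inl ha
    refine Or.inr ((Finset.disjoint_biUnion_right _ _ _).2 fun i hi => ?_)
    exact (hsep g hg a (s.mem_insert_self a) i (s.mem_insert_of_mem hi)
      (ne_of_mem_of_not_mem hi has).symm).resolve_left ha

open Classical in
noncomputable def reach (gens : Set (PauliSpace Q)) (M : Finset Q) : Finset Q :=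
  Finset.univ.filter fun q => ∃ g ∈ gens, q ∈ psupp g ∧ ¬Disjoint (psupp g) M

/-- Of the gauge operator that cleans `v` off `M`, only the generators meeting `M` are kept. -/
lemma IsCorrectable.exists_sub_mem_PMod {gens : Set (PauliSpace Q)} (hG : G = span F2 gens)
    (hM : IsCorrectable G M) {v : PauliSpace Q} (hv : v ∈ pcent (pstab G)) :
    ∃ g ∈ G, v - g ∈ PMod ((psupp v ∪ reach gens M) \ M) := by
  set near := {g ∈ gens | ¬Disjoint (psupp g) M}
  set far := {g ∈ gens | Disjoint (psupp g) M}
  have hspan : G ≤ span F2 near ⊔ span F2 far := by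
    rw [hG, span_le]
    intro g hg
    by_cases h : Disjoint (psupp g) M
    · exact mem_sup_right (subset_span ⟨hg, h⟩)
    · exact mem_sup_left (subset_span ⟨hg, h⟩)
  have hnear : span F2 near ≤ PMod (reach gens M) := span_le_PMod fun g hg q hq => by
    simpa [reach] using ⟨g, hg.1, hq, hg.2⟩
  have hfar : span F2 far ≤ PMod Mᶜ :=
    span_le_PMod fun g hg => Finset.subset_compl_iff_disjoint_right.2 hg.2
  obtain ⟨g, hg, w, hw, hgw⟩ := mem_sup.1 (hM.pcent_pstab_le hv)
  obtain ⟨n, hn, f, hf, rfl⟩ := mem_sup.1 (hspan hg)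
  refine ⟨n, hG ▸ span_mono (Set.sep_subset _ _) hn, ?_⟩
  rw [Finset.sdiff_eq_inter_compl, ← PMod_inf]
  refine ⟨sub_mem (PMod_mono Finset.subset_union_left (mem_PMod_psupp v))
    (PMod_mono Finset.subset_union_right (hnear hn)), ?_⟩
  rw [← hgw, add_assoc, add_sub_cancel_left]
  exact add_mem (hfar hf) hw

lemma IsCorrectable.of_reach {d : ℕ} {gens : Set (PauliSpace Q)} (hG : G = span F2 gens)
    (hd : ∀ v ∈ pcent (pstab G), v ∉ G → d ≤ pwt v) (hM : IsCorrectable G M) {D : Finset Q}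
    (hND : (N ∪ reach gens M) \ M ⊆ D) (hD : D.card < d) : IsCorrectable G N := by
  rintro v ⟨hv, hvN⟩
  obtain ⟨g, hg, hvg⟩ := hM.exists_sub_mem_PMod hG hv
  have hsub : (psupp v ∪ reach gens M) \ M ⊆ D :=
    (Finset.sdiff_subset_sdiff (Finset.union_subset_union (mem_PMod_iff.1 hvN) subset_rfl)
      subset_rfl).trans hND
  have := isCorrectable_of_card_lt hd hD
    ⟨sub_mem hv (le_pcent_pstab G hg), PMod_mono hsub hvg⟩
  simpa using add_mem this hg

end Correctable

section Lattice

variable {L : ℕ}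

lemma _root_.InBox.mono {r s : ℕ} (h : r ≤ s) {S : Finset (Fin L × Fin L)} (hS : InBox r S) :
    InBox s S := by
  obtain ⟨a, b, hab⟩ := hS
  exact ⟨a, b, fun p hp => by have := hab p hp; omega⟩

lemma _root_.HasLocalGens.mono {r s : ℕ} (h : r ≤ s) {G : Submodule F2 (PauliSpace (Fin L × Fin L))}
    (hG : HasLocalGens r G) : HasLocalGens s G := by
  obtain ⟨gens, hspan, hloc⟩ := hG
  exact ⟨gens, hspan, fun g hg => InBox.mono h (hloc g hg)⟩

def box (x y w h : ℕ) : Finset (Fin L × Fin L) :=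
  Finset.univ.filter fun p => x ≤ p.1 ∧ (p.1 : ℕ) < x + w ∧ y ≤ p.2 ∧ (p.2 : ℕ) < y + h

@[simp]
lemma mem_box {x y w h : ℕ} {p : Fin L × Fin L} :
    p ∈ (box x y w h : Finset (Fin L × Fin L)) ↔
      x ≤ p.1 ∧ (p.1 : ℕ) < x + w ∧ y ≤ p.2 ∧ (p.2 : ℕ) < y + h := by
  simp [box]

lemma card_box_le (x y w h : ℕ) : (box x y w h : Finset (Fin L × Fin L)).card ≤ w * h := by
  calc _ ≤ (Finset.Ico x (x + w) ×ˢ Finset.Ico y (y + h)).card :=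
        Finset.card_le_card_of_injOn (fun p => ((p.1 : ℕ), (p.2 : ℕ)))
          (fun p hp => by simp [box] at hp; simp; omega)
          (fun p _ p' _ h => Prod.ext (Fin.ext (congrArg Prod.fst h))
            (Fin.ext (congrArg Prod.snd h)))
    _ = w * h := by simp

def AreApart (ρ : ℕ) (M N : Finset (Fin L × Fin L)) : Prop :=
  ∀ p ∈ M, ∀ p' ∈ N, ρ ≤ Nat.dist p.1 p'.1 ∨ ρ ≤ Nat.dist p.2 p'.2

lemma _root_.InBox.disjoint_or_disjoint {ρ : ℕ} {S M N : Finset (Fin L × Fin L)} (hS : InBox ρ S)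
    (hMN : AreApart ρ M N) : Disjoint S M ∨ Disjoint S N := by
  by_contra! h
  obtain ⟨p, hpS, hpM⟩ := Finset.not_disjoint_iff.1 h.1
  obtain ⟨p', hp'S, hp'N⟩ := Finset.not_disjoint_iff.1 h.2
  obtain ⟨a, b, hab⟩ := hS
  have := hab p hpS
  have := hab p' hp'S
  have := hMN p hpM p' hp'N
  simp only [Nat.dist] at this
  omega

lemma areApart_box {ρ x y w h x' y' w' h' : ℕ}
    (hsep : x + w + ρ ≤ x' ∨ x' + w' + ρ ≤ x ∨ y + h + ρ ≤ y' ∨ y' + h' + ρ ≤ y) :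
    AreApart ρ (box x y w h : Finset (Fin L × Fin L)) (box x' y' w' h') := by
  intro p hp p' hp'
  simp only [mem_box] at hp hp'
  simp only [Nat.dist]
  omega

lemma AreApart.biUnion {ρ : ℕ} {ι κ : Type} {s : Finset ι} {t : Finset κ}
    {P : ι → Finset (Fin L × Fin L)} {P' : κ → Finset (Fin L × Fin L)}
    (h : ∀ i ∈ s, ∀ j ∈ t, AreApart ρ (P i) (P' j)) :
    AreApart ρ (s.biUnion P) (t.biUnion P') := by
  intro p hp p' hp'
  obtain ⟨i, hi, hpi⟩ := Finset.mem_biUnion.1 hp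
  obtain ⟨j, hj, hpj⟩ := Finset.mem_biUnion.1 hp'
  exact h i hi j hj p hpi p' hpj

lemma IsCorrectable.union_of_areApart {ρ : ℕ} {G : Submodule F2 (PauliSpace (Fin L × Fin L))}
    {M N : Finset (Fin L × Fin L)} (hS : HasLocalGens ρ (pstab G)) (hMN : AreApart ρ M N)
    (hM : IsCorrectable G M) (hN : IsCorrectable G N) : IsCorrectable G (M ∪ N) := by
  obtain ⟨gens, hspan, hloc⟩ := hS
  exact hM.union hspan (fun g hg => InBox.disjoint_or_disjoint (hloc g hg) hMN) hN

lemma mem_reach_box {ρ x y w h : ℕ} {gens : Set (PauliSpace (Fin L × Fin L))}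
    (hloc : ∀ g ∈ gens, InBox ρ (psupp g)) {q : Fin L × Fin L}
    (hq : q ∈ reach gens (box x y w h)) :
    x < q.1 + ρ ∧ q.1 + 1 < x + w + ρ ∧ y < q.2 + ρ ∧ q.2 + 1 < y + h + ρ := by
  simp only [reach, Finset.mem_filter, Finset.mem_univ, true_and] at hq
  obtain ⟨g, hg, hqg, hgM⟩ := hq
  obtain ⟨p, hpg, hpM⟩ := Finset.not_disjoint_iff.1 hgM
  obtain ⟨a, b, hab⟩ := hloc g hg
  have := hab p hpg
  have := hab q hqg
  rw [mem_box] at hpM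
  omega

def frame (x y w h s : ℕ) : Finset (Fin L × Fin L) :=
  box (x - s) (y - s) s (h + 2 * s) ∪ box (x + w) (y - s) s (h + 2 * s) ∪
    box x (y - s) w s ∪ box x (y + h) w s

lemma card_frame_le (x y w h s : ℕ) :
    (frame x y w h s : Finset (Fin L × Fin L)).card ≤ 2 * s * (w + h + 2 * s) := by
  calc _ ≤ s * (h + 2 * s) + s * (h + 2 * s) + w * s + w * s := by
        refine (Finset.card_union_le _ _).trans (add_le_add ?_ (card_box_le _ _ _ _))
        refine (Finset.card_union_le _ _).trans (add_le_add ?_ (card_box_le _ _ _ _))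
        exact (Finset.card_union_le _ _).trans (add_le_add (card_box_le _ _ _ _)
          (card_box_le _ _ _ _))
    _ = 2 * s * (w + h + 2 * s) := by ring

/-- Grow the rectangle one column at a time: cleaning pushes each dressed logical operator
into the `ρ`-frame of the previous rectangle, which is smaller than `d`. -/
theorem isCorrectable_box {ρ d : ℕ} {G : Submodule F2 (PauliSpace (Fin L × Fin L))}
    (hG : HasLocalGens ρ G) (hρ : 0 < ρ) (hd : ∀ v ∈ pcent (pstab G), v ∉ G → d ≤ pwt v)
    (x y w h : ℕ) (hsize : 2 * ρ * (w + h + 2 * ρ) < d) : IsCorrectable G (box x y w h) := by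
  obtain ⟨gens, hspan, hloc⟩ := hG
  induction w with
  | zero => exact isCorrectable_of_card_lt hd ((card_box_le x y 0 h).trans_lt (by omega))
  | succ w ih =>
    have hsize' : 2 * ρ * (w + h + 2 * ρ) < d :=
      lt_of_le_of_lt (Nat.mul_le_mul_left _ (by omega)) hsize
    refine (ih hsize').of_reach hspan hd (D := frame x y w h ρ) (fun q hq => ?_)
      ((card_frame_le x y w h ρ).trans_lt hsize')
    simp only [Finset.mem_sdiff, Finset.mem_union, mem_box] at hq
    obtain ⟨hq | hq, hqM⟩ := hq
    · simp only [frame, Finset.mem_union, mem_box]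
      omega
    · have := mem_reach_box hloc hq
      simp only [frame, Finset.mem_union, mem_box]
      omega

def tiling (B n x y w h : ℕ) : Finset (Fin L × Fin L) :=
  (Finset.range n ×ˢ Finset.range n).biUnion fun c => box (B * c.1 + x) (B * c.2 + y) w h

lemma card_tiling_le (B n x y w h : ℕ) :
    (tiling B n x y w h : Finset (Fin L × Fin L)).card ≤ n ^ 2 * (w * h) := by
  have := Finset.card_biUnion_le_card_mul (Finset.range n ×ˢ Finset.range n)
    (fun c => (box (B * c.1 + x) (B * c.2 + y) w h : Finset (Fin L × Fin L))) (w * h)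
    fun _ _ => card_box_le _ _ _ _
  exact this.trans_eq (by rw [Finset.card_product, Finset.card_range, sq])

lemma mem_tiling_of_mod {B n x y w h : ℕ} {q : Fin L × Fin L} (h₁ : q.1 / B < n)
    (h₂ : q.2 / B < n)
    (hq : (x ≤ q.1 % B ∧ q.1 % B < x + w) ∧ (y ≤ q.2 % B ∧ q.2 % B < y + h)) :
    q ∈ tiling B n x y w h := by
  refine Finset.mem_biUnion.2 ⟨(q.1 / B, q.2 / B), by simp [h₁, h₂], ?_⟩
  have := Nat.div_add_mod q.1 B
  have := Nat.div_add_mod q.2 B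
  rw [mem_box]
  dsimp only
  omega

lemma mul_add_le_mul_of_lt {B a a' : ℕ} (h : a < a') : B * a + B ≤ B * a' := by
  simpa [mul_add] using Nat.mul_le_mul_left B h

theorem isCorrectable_tiling {ρ d B n x y w h : ℕ}
    {G : Submodule F2 (PauliSpace (Fin L × Fin L))} (hG : HasLocalGens ρ G)
    (hS : HasLocalGens ρ (pstab G)) (hρ : 0 < ρ)
    (hd : ∀ v ∈ pcent (pstab G), v ∉ G → d ≤ pwt v) (hw : w + ρ ≤ B) (hh : h + ρ ≤ B)
    (hBd : 4 * ρ * B < d) : IsCorrectable G (tiling B n x y w h) := by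
  obtain ⟨gens, hspan, hloc⟩ := hS
  refine IsCorrectable.biUnion hspan (fun g hg c _ c' _ hcc' =>
      InBox.disjoint_or_disjoint (hloc g hg) (areApart_box ?_))
    fun c _ => isCorrectable_box hG hρ hd _ _ _ _ ?_
  · obtain ⟨a, b⟩ := c
    obtain ⟨a', b'⟩ := c'
    dsimp only
    rcases lt_trichotomy a a' with ha | rfl | ha
    · have := mul_add_le_mul_of_lt (B := B) ha
      omega
    · rcases lt_trichotomy b b' with hb | rfl | hb
      · have := mul_add_le_mul_of_lt (B := B) hb
        omega
      · exact absurd rfl hcc'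
      · have := mul_add_le_mul_of_lt (B := B) hb
        omega
    · have := mul_add_le_mul_of_lt (B := B) ha
      omega
  · calc 2 * ρ * (w + h + 2 * ρ) ≤ 2 * ρ * (2 * B) := Nat.mul_le_mul_left _ (by omega)
      _ = 4 * ρ * B := by ring
      _ < d := hBd

/- Within each `B × B` cell: a square of side `B - ρ`, the two corridor segments of width `ρ`
beside it, shortened by `ρ` at both ends so that all segments are `ρ` apart, and the junk
covering the rest. -/
def gridSquares (B ρ n : ℕ) : Finset (Fin L × Fin L) := tiling B n 0 0 (B - ρ) (B - ρ)

def gridCorridors (B ρ n : ℕ) : Finset (Fin L × Fin L) :=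
  tiling B n ρ (B - ρ) (B - 3 * ρ) ρ ∪ tiling B n (B - ρ) ρ ρ (B - 3 * ρ)

def gridJunk (B ρ n : ℕ) : Finset (Fin L × Fin L) :=
  tiling B n (B - ρ) 0 ρ ρ ∪ tiling B n 0 (B - ρ) ρ ρ ∪
    tiling B n (B - 2 * ρ) (B - 2 * ρ) (2 * ρ) (2 * ρ)

lemma card_gridJunk_le (B ρ n : ℕ) :
    (gridJunk B ρ n : Finset (Fin L × Fin L)).card ≤ 6 * ρ ^ 2 * n ^ 2 := by
  have := Finset.card_union_le (tiling B n (B - ρ) 0 ρ ρ : Finset (Fin L × Fin L))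
    (tiling B n 0 (B - ρ) ρ ρ)
  have := card_tiling_le (L := L) B n (B - ρ) 0 ρ ρ
  have := card_tiling_le (L := L) B n 0 (B - ρ) ρ ρ
  have := card_tiling_le (L := L) B n (B - 2 * ρ) (B - 2 * ρ) (2 * ρ) (2 * ρ)
  refine (Finset.card_union_le _ _).trans ?_
  nlinarith

lemma compl_gridSquares_union_gridCorridors_subset {B ρ : ℕ} (hB : 0 < B) :
    (gridSquares B ρ (L / B + 1) ∪ gridCorridors B ρ (L / B + 1) : Finset (Fin L × Fin L))ᶜ ⊆
      gridJunk B ρ (L / B + 1) := by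
  intro q hq
  have hmem {x y w h : ℕ} := mem_tiling_of_mod (n := L / B + 1) (x := x) (y := y) (w := w)
    (h := h) (Nat.lt_succ_of_le (Nat.div_le_div_right q.1.isLt.le))
    (Nat.lt_succ_of_le (Nat.div_le_div_right q.2.isLt.le))
  simp only [gridSquares, gridCorridors, gridJunk, Finset.mem_compl, Finset.mem_union,
    not_or] at hq ⊢
  have := mt hmem hq.1
  have := mt hmem hq.2.1
  have := mt hmem hq.2.2
  have := Nat.mod_lt q.1 hB
  have := Nat.mod_lt q.2 hB
  rcases (show (B - ρ ≤ q.1 % B ∧ q.1 % B < B - ρ + ρ) ∧ (0 ≤ q.2 % B ∧ q.2 % B < 0 + ρ) ∨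
      (0 ≤ q.1 % B ∧ q.1 % B < 0 + ρ) ∧ (B - ρ ≤ q.2 % B ∧ q.2 % B < B - ρ + ρ) ∨
      (B - 2 * ρ ≤ q.1 % B ∧ q.1 % B < B - 2 * ρ + 2 * ρ) ∧
        (B - 2 * ρ ≤ q.2 % B ∧ q.2 % B < B - 2 * ρ + 2 * ρ) by omega) with h | h | h
  · exact Or.inl (Or.inl (hmem h))
  · exact Or.inl (Or.inr (hmem h))
  · exact Or.inr (hmem h)

theorem isCorrectable_gridCorridors {ρ d B n : ℕ}
    {G : Submodule F2 (PauliSpace (Fin L × Fin L))} (hG : HasLocalGens ρ G)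
    (hS : HasLocalGens ρ (pstab G)) (hρ : 0 < ρ)
    (hd : ∀ v ∈ pcent (pstab G), v ∉ G → d ≤ pwt v) (hB : 3 * ρ ≤ B)
    (hBd : 4 * ρ * B < d) : IsCorrectable G (gridCorridors B ρ n) := by
  refine (isCorrectable_tiling hG hS hρ hd (by omega) (by omega) hBd).union_of_areApart hS
    (AreApart.biUnion fun c _ c' _ => areApart_box ?_)
    (isCorrectable_tiling hG hS hρ hd (by omega) (by omega) hBd)
  rcases lt_or_ge c'.1 c.1 with hc | hc
  · have := mul_add_le_mul_of_lt (B := B) hc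
    omega
  · have := Nat.mul_le_mul_left B hc
    omega

theorem logicalQubits_le_of_grid {ρ d B k : ℕ} {G : Submodule F2 (PauliSpace (Fin L × Fin L))}
    (hG : HasLocalGens ρ G) (hS : HasLocalGens ρ (pstab G)) (hρ : 0 < ρ)
    (hd : ∀ v ∈ pcent (pstab G), v ∉ G → d ≤ pwt v)
    (hk : finrank F2 (pcent G) = finrank F2 (pstab G) + 2 * k)
    (hB : 3 * ρ ≤ B) (hBd : 4 * ρ * B < d) : k ≤ 6 * ρ ^ 2 * (L / B + 1) ^ 2 := by
  have hsquares : IsCorrectable G (gridSquares B ρ (L / B + 1)) :=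
    isCorrectable_tiling hG hS hρ hd (by omega) (by omega) hBd
  have := finrank_pcent_le hsquares
    (isCorrectable_gridCorridors (n := L / B + 1) hG hS hρ hd hB hBd)
  have := (Finset.card_le_card (compl_gridSquares_union_gridCorridors_subset (by omega))).trans
    (card_gridJunk_le (L := L) B ρ (L / B + 1))
  omega

lemma logicalQubits_eq_zero_of_lt {ρ d k : ℕ} {G : Submodule F2 (PauliSpace (Fin L × Fin L))}
    (hG : HasLocalGens ρ G) (hρ : 0 < ρ) (hd : ∀ v ∈ pcent (pstab G), v ∉ G → d ≤ pwt v)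
    (hk : finrank F2 (pcent G) = finrank F2 (pstab G) + 2 * k) (hdL : 4 * ρ * (L + ρ) < d) :
    k = 0 := by
  have hall : IsCorrectable G (box 0 0 L L) := isCorrectable_box hG hρ hd 0 0 L L
    (by calc 2 * ρ * (L + L + 2 * ρ) = 4 * ρ * (L + ρ) := by ring
          _ < d := hdL)
  have hempty : (box 0 0 L L ∪ box 0 0 L L : Finset (Fin L × Fin L))ᶜ = ∅ := by
    ext q
    simp
  have := finrank_pcent_le hall hall
  rw [hempty, Finset.card_empty] at this
  omega

end Lattice

lemma mul_sq_le_of_le_grid {L ρ d k B : ℕ} (hL : 0 < L) (hB : 0 < B)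
    (hdB : d < 5 * ρ * (B + 1)) (hBL : B ≤ L + ρ) (hk : k ≤ 6 * ρ ^ 2 * (L / B + 1) ^ 2) :
    k * d ^ 2 ≤ (25 * ρ ^ 2 * (ρ + 2)) ^ 2 * L ^ 2 := by
  have hnd : (L / B + 1) * d ≤ 10 * ρ * (ρ + 2) * L := by
    calc (L / B + 1) * d ≤ (L / B + 1) * (10 * ρ * B) := Nat.mul_le_mul_left _ (by nlinarith)
      _ = 10 * ρ * (L / B * B + B) := by ring
      _ ≤ 10 * ρ * (L + (L + ρ)) := by gcongr; exact Nat.div_mul_le_self L B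
      _ ≤ 10 * ρ * (ρ + 2) * L := by nlinarith
  calc k * d ^ 2 ≤ 6 * ρ ^ 2 * (L / B + 1) ^ 2 * d ^ 2 := Nat.mul_le_mul_right _ hk
    _ = 6 * ρ ^ 2 * ((L / B + 1) * d) ^ 2 := by ring
    _ ≤ 6 * ρ ^ 2 * (10 * ρ * (ρ + 2) * L) ^ 2 := by gcongr
    _ = 600 * (ρ ^ 2 * (ρ + 2) * L) ^ 2 := by ring
    _ ≤ 625 * (ρ ^ 2 * (ρ + 2) * L) ^ 2 := by gcongr; norm_num
    _ = (25 * ρ ^ 2 * (ρ + 2)) ^ 2 * L ^ 2 := by ring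

theorem mul_sq_le_of_hasLocalGens {L ρ d k : ℕ} {G : Submodule F2 (PauliSpace (Fin L × Fin L))}
    (hG : HasLocalGens ρ G) (hS : HasLocalGens ρ (pstab G)) (hρ : 0 < ρ)
    (hd : ∀ v ∈ pcent (pstab G), v ∉ G → d ≤ pwt v)
    (hk : finrank F2 (pcent G) = finrank F2 (pstab G) + 2 * k) :
    k * d ^ 2 ≤ (25 * ρ ^ 2 * (ρ + 2)) ^ 2 * L ^ 2 := by
  have hkL : k ≤ L ^ 2 := by simpa [sq] using le_card_of_finrank_pcent_eq hk
  rcases lt_or_ge d (15 * ρ ^ 2) with hsmall | hd₁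
  · calc k * d ^ 2 ≤ L ^ 2 * (15 * ρ ^ 2) ^ 2 :=
          Nat.mul_le_mul hkL (Nat.pow_le_pow_left hsmall.le 2)
      _ ≤ (25 * ρ ^ 2 * (ρ + 2)) ^ 2 * L ^ 2 := by
          rw [mul_comm]
          exact Nat.mul_le_mul_right _ (Nat.pow_le_pow_left (by nlinarith) 2)
  rcases lt_or_ge (4 * ρ * (L + ρ)) d with hbig | hd₂
  · simp [logicalQubits_eq_zero_of_lt hG hρ hd hk hbig]
  rcases Nat.eq_zero_or_pos L with rfl | hL
  · simp [show k = 0 by simpa using hkL]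
  set B := d / (5 * ρ)
  have h5B : 5 * ρ * B ≤ d := Nat.mul_div_le d (5 * ρ)
  have hB : 3 * ρ ≤ B := (Nat.le_div_iff_mul_le (by positivity)).2 (by nlinarith)
  have hBd : 4 * ρ * B < d := by nlinarith
  exact mul_sq_le_of_le_grid hL (by omega) (Nat.lt_mul_div_succ d (by positivity))
    (show B ≤ L + ρ by nlinarith) (logicalQubits_le_of_grid hG hS hρ hd hk hB hBd)

end SubsystemCode

theorem kd_sq_upper_bound_general (r rs : ℕ) :
    ∃ C : ℝ, 0 < C ∧ ∀ L : ℕ, ∀ G : Submodule F2 (PauliSpace (Fin L × Fin L)),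
      HasLocalGens r G →
      HasLocalGens rs (pstab G) →
      ∀ k : ℕ, 1 ≤ k →
      Module.finrank F2 ↥(pcent G) = Module.finrank F2 ↥(pstab G) + 2 * k →
      ∀ d : ℕ, d = sInf (distSet G) →
      (k : ℝ) * (d : ℝ) ^ 2 ≤ C * (L : ℝ) ^ 2 := by
  set ρ := max r rs + 1
  have hρ : 0 < ρ := Nat.succ_pos _
  refine ⟨((25 * ρ ^ 2 * (ρ + 2)) ^ 2 : ℕ), by positivity, fun L G hG hS k _ hk d hd => ?_⟩
  have hdist : ∀ v ∈ pcent (pstab G), v ∉ G → d ≤ pwt v :=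
    fun v hv hvG => hd ▸ Nat.sInf_le ⟨v, hv, hvG, rfl⟩
  exact_mod_cast SubsystemCode.mul_sq_le_of_hasLocalGens
    (HasLocalGens.mono (by omega) hG)
    (HasLocalGens.mono (by omega) hS) hρ hdist hk

/-- Upper bound `kd² = O(n)` for 2D subsystem codes in which both the gauge group and
the stabilizer group have spatially local generators, where `n = L²`. -/
theorem kd_sq_upper_bound (r rs : ℕ) (hr : 0 < r) (hrs : 0 < rs) :
    ∃ C : ℝ, 0 < C ∧ ∀ L : ℕ, ∀ G : Submodule F2 (PauliSpace (Fin L × Fin L)),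
      HasLocalGens r G →
      HasLocalGens rs (pstab G) →
      ∀ k : ℕ, 1 ≤ k →
      Module.finrank F2 ↥(pcent G) = Module.finrank F2 ↥(pstab G) + 2 * k →
      ∀ d : ℕ, d = sInf (distSet G) →
      (k : ℝ) * (d : ℝ) ^ 2 ≤ C * (L : ℝ) ^ 2 :=
  kd_sq_upper_bound_general r rs
end
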